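/- arXiv:2103.06502 — 3 statements merged into one kernel-verified Lean document; each statement's English description precedes it below -/
import Mathlib

section
/- Suppose for every fixed x ∈ 𝕏 the map u ↦ ∫ f(z) 𝒯(dz|x,u) is continuous for every bounded Borel measurable f : 𝕏 → ℝ (strong continuity in actions). If μ_n → μ in the w-s topology on 𝒫(𝕏×𝔸) (i.e., ∫ g dμ_n → ∫ g dμ for every bounded measurable g(x,u) continuous in u for each fixed x) and sup_{A Borel} |μ_n(A×𝔸) − (μ_n𝒯)(A)| → 0, then μ ∈ 𝒢. -/
open MeasureTheory ProbabilityTheory Filter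
open scoped ENNReal Topology

/-!
Both `p ↦ 1_B(p.1)` and `p ↦ 𝒯(B | p)` are admissible test functions for the w-s topology, the
second one precisely because of the strong continuity of `𝒯` in the action. Hence `μₙ(B × 𝔸)` and
`(μₙ𝒯)(B)` converge to `μ(B × 𝔸)` and `(μ𝒯)(B)`; since their difference tends to `0`, the limits
agree.
-/

lemma abs_indicator_one_le {α : Type*} (s : Set α) (a : α) :
    |s.indicator (1 : α → ℝ) a| ≤ 1 := by
  by_cases ha : a ∈ s <;> simp [ha]

lemma eq_of_tendsto_of_abs_sub_le {a b : ℕ → ℝ} {x y : ℝ}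
    (ha : Tendsto a atTop (𝓝 x)) (hb : Tendsto b atTop (𝓝 y))
    (hab : ∀ ε : ℝ, 0 < ε → ∃ N : ℕ, ∀ n ≥ N, |a n - b n| ≤ ε) : x = y := by
  refine eq_of_forall_dist_le fun ε hε => ?_
  obtain ⟨N, hN⟩ := hab ε hε
  exact le_of_tendsto (ha.dist hb) (eventually_atTop.2 ⟨N, hN⟩)

lemma continuous_indicator_prod_univ_apply {X A : Type*} [TopologicalSpace A] (B : Set X)
    (x : X) : Continuous fun u : A => (B ×ˢ Set.univ).indicator (1 : X × A → ℝ) (x, u) :=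
  (continuous_const (y := B.indicator 1 x)).congr fun u => by by_cases hx : x ∈ B <;> simp [hx]

namespace ProbabilityTheory.Kernel

variable {X A Y : Type*} [MeasurableSpace X] [MeasurableSpace A] [MeasurableSpace Y]

lemma continuous_measureReal_of_continuous_integral [TopologicalSpace A]
    (κ : Kernel (X × A) Y)
    (hκ : ∀ f : Y → ℝ, Measurable f → (∃ M : ℝ, ∀ y, |f y| ≤ M) →
      ∀ x : X, Continuous fun u : A => ∫ y, f y ∂(κ (x, u)))
    {B : Set Y} (hB : MeasurableSet B) (x : X) :
    Continuous fun u : A => (κ (x, u)).real B := by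
  simpa only [integral_indicator_one hB] using
    hκ (B.indicator 1) (measurable_const.indicator hB) ⟨1, abs_indicator_one_le B⟩ x

lemma integral_measureReal_eq_toReal_lintegral (κ : Kernel X Y) [IsFiniteKernel κ]
    (ν : Measure X) {B : Set Y} (hB : MeasurableSet B) :
    ∫ x, (κ x).real B ∂ν = (∫⁻ x, κ x B ∂ν).toReal :=
  integral_toReal (κ.measurable_coe hB).aemeasurable (ae_of_all _ fun _ => measure_lt_top _ _)

end ProbabilityTheory.Kernel

theorem stmt8_general {X A : Type*}
    [MeasurableSpace X]
    [TopologicalSpace A] [MeasurableSpace A]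
    (T : Kernel (X × A) X) [IsMarkovKernel T]
    (hT : ∀ f : X → ℝ, Measurable f → (∃ M : ℝ, ∀ x, |f x| ≤ M) →
      ∀ x : X, Continuous fun u : A => ∫ y, f y ∂(T (x, u)))
    (μseq : ℕ → Measure (X × A))
    (μ : Measure (X × A)) [IsProbabilityMeasure μ]
    (hws : ∀ g : X × A → ℝ, Measurable g → (∃ M : ℝ, ∀ p, |g p| ≤ M) →
      (∀ x : X, Continuous fun u : A => g (x, u)) →
      Tendsto (fun n => ∫ p, g p ∂(μseq n)) atTop (𝓝 (∫ p, g p ∂μ)))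
    (hgap : ∀ ε : ℝ, 0 < ε → ∃ N : ℕ, ∀ n ≥ N, ∀ B : Set X, MeasurableSet B →
      |((μseq n) (B ×ˢ Set.univ)).toReal - (∫⁻ p, T p B ∂(μseq n)).toReal| ≤ ε) :
    ∀ B : Set X, MeasurableSet B →
      μ (B ×ˢ Set.univ) = ∫⁻ p, T p B ∂μ := by
  intro B hB
  have hB_prod : MeasurableSet (B ×ˢ Set.univ : Set (X × A)) := hB.prod .univ
  have h_marginal : Tendsto (fun n => (μseq n).real (B ×ˢ Set.univ)) atTop
      (𝓝 (μ.real (B ×ˢ Set.univ))) := by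
    simpa only [integral_indicator_one hB_prod] using
      hws ((B ×ˢ Set.univ).indicator 1) (measurable_const.indicator hB_prod)
        ⟨1, abs_indicator_one_le _⟩ (continuous_indicator_prod_univ_apply B)
  have h_image : Tendsto (fun n => (∫⁻ p, T p B ∂(μseq n)).toReal) atTop
      (𝓝 (∫⁻ p, T p B ∂μ).toReal) := by
    simpa only [T.integral_measureReal_eq_toReal_lintegral _ hB] using
      hws (fun p => (T p).real B) (T.measurable_coe hB).ennreal_toReal
        ⟨1, fun p => (abs_of_nonneg measureReal_nonneg).trans_le measureReal_le_one⟩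
        (T.continuous_measureReal_of_continuous_integral hT hB)
  have h_real := eq_of_tendsto_of_abs_sub_le h_marginal h_image fun ε hε =>
    (hgap ε hε).imp fun _ hN n hn => hN n hn B hB
  have h_finite : ∫⁻ p, T p B ∂μ ≠ ∞ :=
    Measure.bind_apply hB T.aemeasurable ▸ measure_ne_top (T ∘ₘ μ) B
  exact (ENNReal.toReal_eq_toReal_iff' (measure_ne_top _ _) h_finite).mp h_real

/-- Under strong continuity of the kernel in the action variable for each fixed
state, a `w-s` limit of probability measures whose invariance defect vanishes
uniformly over Borel sets is an invariant occupation measure. -/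
theorem stmt8 {X A : Type*}
    [TopologicalSpace X] [MeasurableSpace X] [OpensMeasurableSpace X]
    [TopologicalSpace A] [MeasurableSpace A] [OpensMeasurableSpace A]
    (T : Kernel (X × A) X) [IsMarkovKernel T]
    (hT : ∀ f : X → ℝ, Measurable f → (∃ M : ℝ, ∀ x, |f x| ≤ M) →
      ∀ x : X, Continuous fun u : A => ∫ y, f y ∂(T (x, u)))
    (μseq : ℕ → Measure (X × A)) (hμseq : ∀ n, IsProbabilityMeasure (μseq n))
    (μ : Measure (X × A)) [IsProbabilityMeasure μ]
    (hws : ∀ g : X × A → ℝ, Measurable g → (∃ M : ℝ, ∀ p, |g p| ≤ M) →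
      (∀ x : X, Continuous fun u : A => g (x, u)) →
      Tendsto (fun n => ∫ p, g p ∂(μseq n)) atTop (𝓝 (∫ p, g p ∂μ)))
    (hgap : ∀ ε : ℝ, 0 < ε → ∃ N : ℕ, ∀ n ≥ N, ∀ B : Set X, MeasurableSet B →
      |((μseq n) (B ×ˢ Set.univ)).toReal - (∫⁻ p, T p B ∂(μseq n)).toReal| ≤ ε) :
    ∀ B : Set X, MeasurableSet B →
      μ (B ×ˢ Set.univ) = ∫⁻ p, T p B ∂μ :=
  stmt8_general T hT μseq μ hws hgap
end

section
/- Suppose there is a finite measure ν on 𝕏 with 𝒯(dy|x,u) ≤ ν(dy) for all (x,u), i.e., 𝒯(A|x,u) ≤ ν(A) for all Borel A and all (x,u) ∈ 𝕏×𝔸. Then for any sequence of probability measures μ_n on 𝕏×𝔸, the sequence of state marginals of the 'one-step' measures (μ_n𝒯) defined by (μ_n𝒯)(A) = ∫ 𝒯(A|x,u)μ_n(dx,du) is setwise sequentially precompact: every subsequence has a further subsequence converging setwise to a probability measure on 𝕏. -/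
/-! Since `μₙ𝒯 ≤ ν`, the densities `dμₙ𝒯/dν` are bounded by `1`, hence form a bounded sequence in
the Hilbert space `L²(ν)`. A weakly convergent subsequence, tested against indicators, converges
setwise to the measure with the limit density, which has mass `1` because every `μₙ𝒯` has. -/

open MeasureTheory ProbabilityTheory Filter
open scoped ENNReal Topology InnerProductSpace

theorem InnerProductSpace.exists_subseq_tendsto_inner_of_norm_le {𝕜 H : Type*} [RCLike 𝕜]
    [NormedAddCommGroup H] [InnerProductSpace 𝕜 H] [CompleteSpace H]
    {F : ℕ → H} {M : ℝ} (hM : ∀ n, ‖F n‖ ≤ M) :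
    ∃ ψ : ℕ → ℕ, StrictMono ψ ∧ ∃ g : H,
      ∀ h : H, Tendsto (fun k => ⟪F (ψ k), h⟫_𝕜) atTop (𝓝 ⟪g, h⟫_𝕜) := by
  -- `K` is separable, so sequential Banach–Alaoglu applies in its dual; projecting onto `K`
  -- changes no `⟪F n, h⟫`.
  set K := (Submodule.span 𝕜 (Set.range F)).topologicalClosure
  have : TopologicalSpace.SeparableSpace K := by
    have := ((Set.countable_range F).isSeparable.span (R := 𝕜)).closure
    rw [← Submodule.topologicalClosure_coe] at this
    exact this.separableSpace
  have : CompleteSpace K := Submodule.isClosed_topologicalClosure _ |>.completeSpace_coe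
  have hFK n : F n ∈ K :=
    Submodule.le_topologicalClosure _ (Submodule.subset_span ⟨n, rfl⟩)
  set φ : ℕ → WeakDual 𝕜 K := fun n => toDual 𝕜 K ⟨F n, hFK n⟩
  have hφ n : φ n ∈ WeakDual.toStrongDual ⁻¹' Metric.closedBall 0 M := by
    rw [Set.mem_preimage, mem_closedBall_zero_iff]
    change ‖toDual 𝕜 K ⟨F n, hFK n⟩‖ ≤ M
    simpa using hM n
  obtain ⟨Λ, -, ψ, hψ, hΛ⟩ := WeakDual.isSeqCompact_closedBall 𝕜 K 0 M hφ
  refine ⟨ψ, hψ, (toDual 𝕜 K).symm (WeakDual.toStrongDual Λ), fun h => ?_⟩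
  rw [← K.inner_orthogonalProjectionOnto_eq_of_mem_left,
    InnerProductSpace.toDual_symm_apply]
  refine ((WeakDual.eval_continuous _).tendsto Λ |>.comp hΛ).congr fun k => ?_
  exact K.inner_orthogonalProjectionOnto_eq_of_mem_left ⟨F (ψ k), hFK _⟩ h

namespace MeasureTheory.Measure

variable {X : Type*} [MeasurableSpace X] {μ ν : Measure X}

theorem bind_le_of_forall_le {Y : Type*} [MeasurableSpace Y] {μ : Measure Y}
    [IsProbabilityMeasure μ] {κ : Kernel Y X} (h : ∀ y, κ y ≤ ν) : μ.bind κ ≤ ν :=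
  le_intro fun B hB _ => by
    rw [bind_apply hB κ.measurable.aemeasurable]
    calc ∫⁻ y, κ y B ∂μ ≤ ∫⁻ _, ν B ∂μ := lintegral_mono fun y => h y B
      _ = ν B := by simp

theorem ae_norm_toReal_rnDeriv_le_one [SigmaFinite ν] (h : μ ≤ ν) :
    ∀ᵐ x ∂ν, ‖(μ.rnDeriv ν x).toReal‖ ≤ 1 := by
  filter_upwards [rnDeriv_le_one_of_le h] with x hx
  rw [Real.norm_eq_abs, abs_of_nonneg ENNReal.toReal_nonneg]
  exact ENNReal.toReal_le_of_le_ofReal zero_le_one (by simpa using hx)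

theorem memLp_toReal_rnDeriv_of_le [IsFiniteMeasure ν] (h : μ ≤ ν) (p : ℝ≥0∞) :
    MemLp (fun x => (μ.rnDeriv ν x).toReal) p ν :=
  .of_bound (measurable_rnDeriv μ ν).ennreal_toReal.aestronglyMeasurable 1
    (ae_norm_toReal_rnDeriv_le_one h)

theorem inner_indicatorConstLp_one_toLp_rnDeriv [IsFiniteMeasure ν] (h : μ ≤ ν) {B : Set X}
    (hB : MeasurableSet B) :
    ⟪indicatorConstLp 2 hB (measure_ne_top ν B) (1 : ℝ),
      (memLp_toReal_rnDeriv_of_le h 2).toLp _⟫_ℝ = μ.real B := by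
  have : IsFiniteMeasure μ := isFiniteMeasure_of_le ν h
  rw [L2.inner_indicatorConstLp_one, ← setIntegral_toReal_rnDeriv h.absolutelyContinuous B]
  exact setIntegral_congr_ae hB <| by
    filter_upwards [(memLp_toReal_rnDeriv_of_le h 2).coeFn_toLp] with x hx _ using hx

theorem tendsto_withDensity_of_tendsto_setIntegral {ι : Type*} {l : Filter ι} [l.NeBot]
    {μ : ι → Measure X} [∀ i, IsFiniteMeasure (μ i)] {g : X → ℝ} (hg : Integrable g ν)
    (h : ∀ B, MeasurableSet B → Tendsto (fun i => (μ i).real B) l (𝓝 (∫ x in B, g x ∂ν)))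
    {B : Set X} (hB : MeasurableSet B) :
    Tendsto (fun i => μ i B) l (𝓝 (ν.withDensity (fun x => ENNReal.ofReal (g x)) B)) := by
  have hg_nonneg : 0 ≤ᵐ[ν] g := ae_nonneg_of_forall_setIntegral_nonneg hg fun s hs _ =>
    ge_of_tendsto (h s hs) (Eventually.of_forall fun _ => measureReal_nonneg)
  rw [withDensity_apply _ hB, ← ofReal_integral_eq_lintegral_ofReal hg.integrableOn
    (ae_restrict_of_ae hg_nonneg)]
  exact (ENNReal.tendsto_ofReal (h B hB)).congr fun i => ofReal_measureReal

theorem exists_subseq_tendsto_apply_of_forall_le [IsFiniteMeasure ν] {μ : ℕ → Measure X}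
    (h : ∀ n, μ n ≤ ν) :
    ∃ ψ : ℕ → ℕ, StrictMono ψ ∧ ∃ π : Measure X,
      ∀ B, MeasurableSet B → Tendsto (fun k => μ (ψ k) B) atTop (𝓝 (π B)) := by
  have (n : ℕ) : IsFiniteMeasure (μ n) := isFiniteMeasure_of_le ν (h n)
  set F : ℕ → Lp ℝ 2 ν := fun n => (memLp_toReal_rnDeriv_of_le (h n) 2).toLp _
  have hF n : ‖F n‖ ≤ _ :=
    Lp.norm_le_of_ae_bound zero_le_one <| by
      filter_upwards [(memLp_toReal_rnDeriv_of_le (h n) 2).coeFn_toLp,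
        ae_norm_toReal_rnDeriv_le_one (h n)] with x hx hle
      rwa [hx]
  obtain ⟨ψ, hψ, g, hg⟩ := InnerProductSpace.exists_subseq_tendsto_inner_of_norm_le (𝕜 := ℝ) hF
  refine ⟨ψ, hψ, ν.withDensity fun x => ENNReal.ofReal (g x), fun B hB => ?_⟩
  refine tendsto_withDensity_of_tendsto_setIntegral ((Lp.memLp g).integrable one_le_two)
    (fun B hB => ?_) hB
  have := hg (indicatorConstLp 2 hB (measure_ne_top ν B) 1)
  simpa only [real_inner_comm (indicatorConstLp _ _ _ _), F,
    inner_indicatorConstLp_one_toLp_rnDeriv (h _), L2.inner_indicatorConstLp_one] using this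

end MeasureTheory.Measure

/-- If the transition kernel is majorized by a finite measure `ν`, then the
one-step state measures `μₙ𝒯` of any sequence of probability measures are
setwise sequentially precompact. -/
theorem stmt9 {X A : Type*} [MeasurableSpace X] [MeasurableSpace A]
    (T : Kernel (X × A) X) [IsMarkovKernel T]
    (ν : Measure X) [IsFiniteMeasure ν]
    (hmaj : ∀ p : X × A, ∀ B : Set X, MeasurableSet B → T p B ≤ ν B)
    (μseq : ℕ → Measure (X × A)) (hμseq : ∀ n, IsProbabilityMeasure (μseq n)) :
    ∀ φ : ℕ → ℕ, StrictMono φ →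
      ∃ ψ : ℕ → ℕ, StrictMono ψ ∧ ∃ π : Measure X, IsProbabilityMeasure π ∧
        ∀ B : Set X, MeasurableSet B →
          Tendsto (fun k => ((μseq (φ (ψ k))).bind T) B) atTop (𝓝 (π B)) := by
  intro φ _
  have hT p : T p ≤ ν := Measure.le_intro fun B hB _ => hmaj p B hB
  have hbind n : IsProbabilityMeasure ((μseq n).bind T) :=
    have := hμseq n
    isProbabilityMeasure_bind T.measurable.aemeasurable (ae_of_all _ fun _ => inferInstance)
  obtain ⟨ψ, hψ, π, hπ⟩ := Measure.exists_subseq_tendsto_apply_of_forall_le fun n =>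
    have := hμseq (φ n)
    Measure.bind_le_of_forall_le (μ := μseq (φ n)) hT
  refine ⟨ψ, hψ, π, ⟨tendsto_nhds_unique (hπ _ .univ) ?_⟩, hπ⟩
  simp
end

section
/- Suppose 𝒯(D|x,u) ≥ ∫_D f(x,u,y) φ(dy) for all Borel D, where f : 𝕏×𝔸×𝕏 → [0,∞) is measurable, continuous in (x,u) for every fixed y, 𝔸 is compact, and ∫ inf_{x∈A, u∈𝔸} f(x,u,y) φ(dy) > 0 for every nonempty compact A ⊆ 𝕏. Then every nonempty compact set A ⊆ 𝕏 is 1-small uniformly over all stationary policies: there is a nontrivial positive measure ν_A on 𝕏 such that for every stationary policy γ, 𝒯^γ(D|x) = ∫γ(du|x)𝒯(D|x,u) ≥ ν_A(D) for all x ∈ A and Borel D. -/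
open MeasureTheory ProbabilityTheory
open scoped ENNReal

/-!
The minorizing measure for `C` is `φ` with density `y ↦ inf_{x ∈ C, u} f(x,u,y)`. This density
lies below every `f(x,u,·)` with `x ∈ C`, so the measure minorizes every `T(x,u)`, hence every
mixture `∫ T(x,u) γ(du|x)`; it is nonzero because its total mass is the positive integral of
the infimum.
-/

lemma MeasureTheory.Measure.withDensity_ne_zero_of_lintegral_ne_zero {α : Type*}
    [MeasurableSpace α] {μ : Measure α} {g : α → ℝ≥0∞} (h : ∫⁻ y, g y ∂μ ≠ 0) :
    μ.withDensity g ≠ 0 := by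
  intro h0
  apply h
  rw [← setLIntegral_univ, ← withDensity_apply g MeasurableSet.univ, h0, Measure.coe_zero,
    Pi.zero_apply]

section InfDensity

variable {X A : Type*}

noncomputable def infDensity (f : X → A → X → ℝ) (C : Set X) (y : X) : ℝ≥0∞ :=
  ⨅ (x : X) (_ : x ∈ C), ⨅ u : A, ENNReal.ofReal (f x u y)

lemma infDensity_le {f : X → A → X → ℝ} {C : Set X} {x : X} (hx : x ∈ C) (u : A) (y : X) :
    infDensity f C y ≤ ENNReal.ofReal (f x u y) :=
  (iInf₂_le x hx).trans (iInf_le _ u)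

variable [MeasurableSpace X] [MeasurableSpace A]

lemma withDensity_infDensity_apply_le_kernel {T : Kernel (X × A) X} {φ : Measure X}
    {f : X → A → X → ℝ}
    (hminor : ∀ (x : X) (u : A), ∀ D : Set X, MeasurableSet D →
      ∫⁻ y in D, ENNReal.ofReal (f x u y) ∂φ ≤ T (x, u) D)
    {C : Set X} {x : X} (hx : x ∈ C) (u : A) {D : Set X} (hD : MeasurableSet D) :
    φ.withDensity (infDensity f C) D ≤ T (x, u) D :=
  calc φ.withDensity (infDensity f C) D
      ≤ φ.withDensity (fun y => ENNReal.ofReal (f x u y)) D :=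
        withDensity_mono (Filter.Eventually.of_forall (infDensity_le hx u)) D
    _ = ∫⁻ y in D, ENNReal.ofReal (f x u y) ∂φ := withDensity_apply _ hD
    _ ≤ T (x, u) D := hminor x u D hD

end InfDensity

theorem stmt16_general {X A : Type*}
    [TopologicalSpace X] [MeasurableSpace X]
    [MeasurableSpace A]
    (T : Kernel (X × A) X)
    (φ : Measure X)
    (f : X → A → X → ℝ)
    (hminor : ∀ (x : X) (u : A), ∀ D : Set X, MeasurableSet D →
      ∫⁻ y in D, ENNReal.ofReal (f x u y) ∂φ ≤ T (x, u) D)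
    (hpos : ∀ C : Set X, IsCompact C → C.Nonempty →
      0 < ∫⁻ y, ⨅ (x : X) (_ : x ∈ C), ⨅ u : A, ENNReal.ofReal (f x u y) ∂φ) :
    ∀ C : Set X, IsCompact C → C.Nonempty →
      ∃ ν : Measure X, ν ≠ 0 ∧
        ∀ γ : Kernel X A, IsMarkovKernel γ →
          ∀ x ∈ C, ∀ D : Set X, MeasurableSet D →
            ν D ≤ ∫⁻ u, T (x, u) D ∂(γ x) := by
  intro C hC hCne
  refine ⟨φ.withDensity (infDensity f C),
    Measure.withDensity_ne_zero_of_lintegral_ne_zero (hpos C hC hCne).ne',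
    fun γ hγ x hx D hD => ?_⟩
  have : IsProbabilityMeasure (γ x) := hγ.isProbabilityMeasure x
  exact (le_iInf fun u => withDensity_infDensity_apply_le_kernel hminor hx u hD).trans
    (iInf_le_lintegral _)

/-- Under a minorization by a density `f` that is continuous in `(x,u)`, with
compact action space and positive infima over compact state sets, every
nonempty compact set is `1`-small uniformly over all stationary policies. -/
theorem stmt16 {X A : Type*}
    [TopologicalSpace X] [MeasurableSpace X] [OpensMeasurableSpace X]
    [TopologicalSpace A] [MeasurableSpace A] [OpensMeasurableSpace A]
    [CompactSpace A]
    (T : Kernel (X × A) X) [IsMarkovKernel T]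
    (φ : Measure X)
    (f : X → A → X → ℝ) (hf0 : ∀ x u y, 0 ≤ f x u y)
    (hfm : Measurable fun q : (X × A) × X => f q.1.1 q.1.2 q.2)
    (hfc : ∀ y : X, Continuous fun p : X × A => f p.1 p.2 y)
    (hminor : ∀ (x : X) (u : A), ∀ D : Set X, MeasurableSet D →
      ∫⁻ y in D, ENNReal.ofReal (f x u y) ∂φ ≤ T (x, u) D)
    (hpos : ∀ C : Set X, IsCompact C → C.Nonempty →
      0 < ∫⁻ y, ⨅ (x : X) (_ : x ∈ C), ⨅ u : A, ENNReal.ofReal (f x u y) ∂φ) :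
    ∀ C : Set X, IsCompact C → C.Nonempty →
      ∃ ν : Measure X, ν ≠ 0 ∧
        ∀ γ : Kernel X A, IsMarkovKernel γ →
          ∀ x ∈ C, ∀ D : Set X, MeasurableSet D →
            ν D ≤ ∫⁻ u, T (x, u) D ∂(γ x) :=
  stmt16_general T φ f hminor hpos
end
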